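/- Let f ∈ Hol(α) be a bounded α-Hölder potential with conformal measure ν, eigenvalue λ_f and Hölder eigenfunction h normalized so that ∫_X h dν = 1. Then sup_{μ ∈ M^a_σ(X)} [ h^v(μ) + μ(f) ] = log λ_f, and this supremum is attained by the countably additive Borel probability measure μ_f = h·dν (i.e. μ_f(A) = ∫_A h dν); in particular, f admits an equilibrium state whose Yosida–Hewitt decomposition has no purely finitely additive part. -/

import Mathlib

/-!
Taking `g = f` in the infimum that defines `h^v` gives `h^v(μ) + μ(f) ≤ log λ_f` for every `μ`,
and `log λ_f = log λ` because `L_fⁿ 1` is comparable to `λⁿ h`. Equality at `μ_f = h dν` follows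
from the Gibbs inequality `log λ_g ≥ log λ + μ_f(g - f)` for Hölder `g`. With the Markov operator
`P φ = L_f(h φ) / (λ h)` and `Φₙ = log (L_gⁿ h / (λⁿ h))` one has
`Φₙ₊₁ = log P (exp (g - f + Φₙ)) ≥ P (g - f + Φₙ)` by Jensen, and conformality of `ν` makes `μ_f`
invariant under `P` (and under the shift), so `μ_f(Φₙ) ≥ n μ_f(g - f)`. Bounded distortion of
`L_gⁿ 1`, which comes from the Hölder condition and `d(ax, ay) = d(x, y) / 2`, turns this into
the bound on `log λ_g`; combined with Fekete's lemma it also shows that the limit defining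
`log λ_g` exists.
-/

open MeasureTheory Filter Topology BoundedContinuousFunction

noncomputable section

variable {E : Type*} [MetricSpace E]

/-- The metric on the sequence space `X = E^ℕ`:
`d_X(x,y) = ∑_{n=1}^∞ 2⁻ⁿ · min(d_E(x_n,y_n), 1)`. -/
def dX (x y : ℕ → E) : ℝ :=
  ∑' n : ℕ, ((1 : ℝ) / 2) ^ (n + 1) * min (dist (x n) (y n)) 1

/-- The left shift `σ(x₁,x₂,x₃,…) = (x₂,x₃,…)`. -/
def shift (x : ℕ → E) : ℕ → E := fun n => x (n + 1)

theorem continuous_shift : Continuous (shift (E := E)) :=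
  continuous_pi fun n => continuous_apply (n + 1)

/-- Prepending one symbol: `ax = (a, x₁, x₂, …)`. -/
def cons (a : E) (x : ℕ → E) : ℕ → E := fun n => Nat.casesOn n a x

/-- Prepending a finite word `a = (a₁,…,a_n)`. -/
def prepend {n : ℕ} (a : Fin n → E) (x : ℕ → E) : ℕ → E :=
  fun k => if h : k < n then a ⟨k, h⟩ else x (k - n)

/-- Birkhoff sums `f_n = ∑_{k=0}^{n-1} f ∘ σᵏ`. -/
def birkhoff (f : (ℕ → E) → ℝ) (n : ℕ) (x : ℕ → E) : ℝ :=
  ∑ k ∈ Finset.range n, f (shift^[k] x)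

/-- Boundedness of a real-valued function on `X`. -/
def Bdd (g : (ℕ → E) → ℝ) : Prop := ∃ M : ℝ, ∀ x, |g x| ≤ M

/-- `g` is `α`-Hölder with constant `C` (w.r.t. the metric `dX`). -/
def HolderConst (α C : ℝ) (g : (ℕ → E) → ℝ) : Prop :=
  ∀ x y, |g x - g y| ≤ C * dX x y ^ α

/-- `g ∈ Hol(α)`: bounded, continuous and `α`-Hölder. -/
def MemHol (α : ℝ) (g : (ℕ → E) → ℝ) : Prop :=
  Continuous g ∧ Bdd g ∧ ∃ C : ℝ, HolderConst α C g

/-- `g ∈ C_b(X,ℝ)`: bounded and continuous. -/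
def MemCb (g : (ℕ → E) → ℝ) : Prop := Continuous g ∧ Bdd g

/-- The Hölder seminorm `D_α(g) = sup_{x ≠ y} |g x - g y| / d_X(x,y)^α`. -/
def Dalpha (α : ℝ) (g : (ℕ → E) → ℝ) : ℝ :=
  sSup {r : ℝ | ∃ x y : ℕ → E, x ≠ y ∧ r = |g x - g y| / dX x y ^ α}

/-- The supremum norm `‖g‖_∞`. -/
def supNorm (g : (ℕ → E) → ℝ) : ℝ := ⨆ x : ℕ → E, |g x|

/-- The Hölder norm `‖g‖_α = ‖g‖_∞ + D_α(g)`. -/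
def alphaNorm (α : ℝ) (g : (ℕ → E) → ℝ) : ℝ := supNorm g + Dalpha α g

variable [MeasurableSpace E] [BorelSpace E]

/-- The Ruelle transfer operator `L_f φ(x) = ∫_E e^{f(ax)} φ(ax) dp(a)`. -/
def ruelle (p : Measure E) (f φ : (ℕ → E) → ℝ) : (ℕ → E) → ℝ :=
  fun x => ∫ a, Real.exp (f (cons a x)) * φ (cons a x) ∂p

/-- The normalized operators `P^m_n(φ) = L_f^m(φ · L_f^n 1) / L_f^{m+n} 1`. -/
def Pmn (p : Measure E) (f : (ℕ → E) → ℝ) (m n : ℕ) (φ : (ℕ → E) → ℝ) : (ℕ → E) → ℝ :=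
  fun x => (ruelle p f)^[m] (fun y => φ y * (ruelle p f)^[n] (fun _ => 1) y) x /
    (ruelle p f)^[m + n] (fun _ => 1) x

/-- The equivalent bounded metric `d̄(x,y) = min{1, 4 C_f d_X(x,y)^α}`. -/
def dbar (Cf α : ℝ) (x y : ℕ → E) : ℝ := min 1 (4 * Cf * dX x y ^ α)

/-- The Wasserstein distance associated to `d̄`, via Kantorovich duality. -/
def wass (Cf α : ℝ) (μ₁ μ₂ : Measure (ℕ → E)) : ℝ :=
  sSup {r : ℝ | ∃ g : (ℕ → E) → ℝ,
    (∀ x y, |g x - g y| ≤ dbar Cf α x y) ∧ r = (∫ x, g x ∂μ₁) - ∫ x, g x ∂μ₂}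

/-- The shift as a continuous self-map of `X`. -/
def shiftCM : C(ℕ → E, ℕ → E) := ⟨shift, continuous_shift⟩

variable (E) in
/-- `M^a_1(X)`: the finitely additive probability functionals, i.e. the weak-* dual
elements `μ` of `C_b(X,ℝ)` with `μ(1) = 1` and `μ(g) ≥ 0` whenever `g ≥ 0`. -/
def Ma1 : Set (WeakDual ℝ ((ℕ → E) →ᵇ ℝ)) :=
  {μ | μ 1 = 1 ∧ ∀ g : (ℕ → E) →ᵇ ℝ, 0 ≤ g → 0 ≤ μ g}

variable (E) in
/-- `M^a_σ(X)`: the shift-invariant elements of `M^a_1(X)`. -/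
def Maσ : Set (WeakDual ℝ ((ℕ → E) →ᵇ ℝ)) :=
  {μ | μ ∈ Ma1 E ∧ ∀ g : (ℕ → E) →ᵇ ℝ, μ (g.compContinuous shiftCM) = μ g}

/-- `log λ_g = lim_{n→∞} (1/n) log (L_g^n 1)(x₀)`, which exists and is independent
of the choice of `x₀ ∈ X` for bounded Hölder `g`. -/
def logLambda [Nonempty E] (p : Measure E) (g : (ℕ → E) → ℝ) : ℝ :=
  limUnder atTop fun n : ℕ =>
    (1 / (n : ℝ)) * Real.log ((ruelle p g)^[n] (fun _ => 1) (Classical.arbitrary (ℕ → E)))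

/-- The variational entropy `h^v(μ) = inf { -μ(g) + log λ_g : g ∈ Hol(α) bounded }`,
with values in `ℝ ∪ {-∞}` (encoded in `EReal`). -/
def entropyV [Nonempty E] (p : Measure E) (α : ℝ) (μ : WeakDual ℝ ((ℕ → E) →ᵇ ℝ)) : EReal :=
  sInf {r : EReal | ∃ g : (ℕ → E) →ᵇ ℝ, (∃ C : ℝ, HolderConst α C ⇑g) ∧
    r = ((-(μ g) + logLambda p ⇑g : ℝ) : EReal)}

end

noncomputable section

variable {E : Type*}

section Metric

variable [MetricSpace E]

theorem summable_dX_term (x y : ℕ → E) :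
    Summable fun n : ℕ => ((1 : ℝ) / 2) ^ (n + 1) * min (dist (x n) (y n)) 1 :=
  Summable.of_nonneg_of_le (fun _ => by positivity)
    (fun _ => mul_le_of_le_one_right (by positivity) (min_le_right _ _))
    ((summable_nat_add_iff 1).2 summable_geometric_two)

theorem dX_nonneg (x y : ℕ → E) : 0 ≤ dX x y := tsum_nonneg fun _ => by positivity

theorem dX_le_one (x y : ℕ → E) : dX x y ≤ 1 := by
  calc dX x y ≤ ∑' n : ℕ, ((1 : ℝ) / 2) ^ n * (1 / 2) :=
        (summable_dX_term x y).tsum_le_tsum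
          (fun n => pow_succ ((1 : ℝ) / 2) n ▸
            mul_le_of_le_one_right (by positivity) (min_le_right _ _))
          (summable_geometric_two.mul_right _)
    _ = 1 := by rw [tsum_mul_right, tsum_geometric_two]; norm_num

theorem dX_cons (a : E) (x y : ℕ → E) : dX (cons a x) (cons a y) = dX x y / 2 := by
  have h0 : cons a x 0 = cons a y 0 := rfl
  rw [dX, (summable_dX_term _ _).tsum_eq_zero_add, dX, ← tsum_div_const, h0, dist_self,
    min_eq_left zero_le_one, mul_zero, zero_add]
  exact tsum_congr fun n => by rw [pow_succ _ (n + 1)]; simp only [cons]; ring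

theorem dX_cons_rpow {α : ℝ} (a : E) (x y : ℕ → E) :
    dX (cons a x) (cons a y) ^ α = dX x y ^ α / 2 ^ α := by
  rw [dX_cons, Real.div_rpow (dX_nonneg x y) zero_le_two]

theorem HolderConst.le_add_of_cons {α C : ℝ} {g : (ℕ → E) → ℝ} (hg : HolderConst α C g)
    (a : E) (x y : ℕ → E) : g (cons a x) ≤ g (cons a y) + C * (dX x y ^ α / 2 ^ α) := by
  have := (abs_le.1 (hg (cons a x) (cons a y))).2
  rw [dX_cons_rpow] at this
  linarith

theorem continuous_cons_left (x : ℕ → E) : Continuous fun a : E => cons a x :=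
  continuous_pi fun n => by cases n <;> simp only [cons] <;> fun_prop

theorem continuous_cons_right (a : E) : Continuous fun x : ℕ → E => cons a x :=
  continuous_pi fun n => by cases n <;> simp only [cons] <;> fun_prop

theorem memCb_const (c : ℝ) : MemCb fun _ : ℕ → E => c :=
  ⟨continuous_const, |c|, fun _ => le_rfl⟩

theorem BoundedContinuousFunction.memCb (g : (ℕ → E) →ᵇ ℝ) : MemCb ⇑g :=
  ⟨g.continuous, ‖g‖, fun x => by simpa [Real.norm_eq_abs] using g.norm_coe_le_norm x⟩

namespace MemCb

variable {φ ψ : (ℕ → E) → ℝ}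

theorem mul (hφ : MemCb φ) (hψ : MemCb ψ) : MemCb fun y => φ y * ψ y := by
  obtain ⟨hφc, M, hM⟩ := hφ
  obtain ⟨hψc, N, hN⟩ := hψ
  refine ⟨hφc.mul hψc, M * N, fun x => ?_⟩
  rw [abs_mul]
  exact mul_le_mul (hM x) (hN x) (abs_nonneg _) ((abs_nonneg _).trans (hM x))

theorem add (hφ : MemCb φ) (hψ : MemCb ψ) : MemCb fun y => φ y + ψ y := by
  obtain ⟨hφc, M, hM⟩ := hφ
  obtain ⟨hψc, N, hN⟩ := hψ
  exact ⟨hφc.add hψc, M + N, fun x => (abs_add_le _ _).trans (add_le_add (hM x) (hN x))⟩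

theorem sub (hφ : MemCb φ) (hψ : MemCb ψ) : MemCb fun y => φ y - ψ y := by
  obtain ⟨hφc, M, hM⟩ := hφ
  obtain ⟨hψc, N, hN⟩ := hψ
  exact ⟨hφc.sub hψc, M + N, fun x => (abs_sub _ _).trans (add_le_add (hM x) (hN x))⟩

theorem const_mul (hφ : MemCb φ) (c : ℝ) : MemCb fun y => c * φ y :=
  (memCb_const c).mul hφ

theorem exp (hφ : MemCb φ) : MemCb fun y => Real.exp (φ y) := by
  obtain ⟨hφc, M, hM⟩ := hφ
  refine ⟨hφc.rexp, Real.exp M, fun x => ?_⟩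
  rw [abs_of_pos (Real.exp_pos _)]
  exact Real.exp_le_exp.2 ((le_abs_self _).trans (hM x))

theorem log (hφ : MemCb φ) {c : ℝ} (hc : 0 < c) (hφc : ∀ x, c ≤ φ x) :
    MemCb fun y => Real.log (φ y) := by
  obtain ⟨hφc', M, hM⟩ := hφ
  refine ⟨hφc'.log fun x => (hc.trans_le (hφc x)).ne', |Real.log c| + |Real.log M|,
    fun x => abs_le.2 ⟨?_, ?_⟩⟩
  · linarith [neg_abs_le (Real.log c), abs_nonneg (Real.log M),
      Real.log_le_log hc (hφc x)]
  · have hx := hc.trans_le (hφc x)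
    linarith [le_abs_self (Real.log M), abs_nonneg (Real.log c),
      Real.log_le_log hx ((le_abs_self _).trans (hM x))]

theorem comp_shift (hφ : MemCb φ) : MemCb fun x => φ (shift x) :=
  ⟨hφ.1.comp continuous_shift, hφ.2.choose, fun x => hφ.2.choose_spec (shift x)⟩

def toBCF (hφ : MemCb φ) : (ℕ → E) →ᵇ ℝ :=
  .mkOfBound ⟨φ, hφ.1⟩ (2 * hφ.2.choose) fun x y => by
    rw [Real.dist_eq, two_mul]
    exact (abs_sub _ _).trans (add_le_add (hφ.2.choose_spec x) (hφ.2.choose_spec y))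

@[simp]
theorem coe_toBCF (hφ : MemCb φ) : ⇑hφ.toBCF = φ := rfl

theorem integrable [MeasurableSpace E] [OpensMeasurableSpace (ℕ → E)] (hφ : MemCb φ)
    (μ : Measure (ℕ → E)) [IsFiniteMeasure μ] : Integrable φ μ :=
  hφ.toBCF.integrable μ

theorem integrable_comp_cons [MeasurableSpace E] [OpensMeasurableSpace E] (hφ : MemCb φ)
    (p : Measure E) [IsFiniteMeasure p] (x : ℕ → E) : Integrable (fun a => φ (cons a x)) p :=
  .of_bound (hφ.1.comp (continuous_cons_left x)).aestronglyMeasurable hφ.2.choose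
    (ae_of_all _ fun _ => hφ.2.choose_spec _)

end MemCb

end Metric

section RuelleAlgebra

variable [MeasurableSpace E] {p : Measure E} {f : (ℕ → E) → ℝ}

theorem ruelle_const_mul (p : Measure E) (f φ : (ℕ → E) → ℝ) (c : ℝ) :
    ruelle p f (fun y => c * φ y) = fun x => c * ruelle p f φ x := by
  ext x
  rw [ruelle, ruelle, ← integral_const_mul]
  exact integral_congr_ae (ae_of_all _ fun a => by ring)

theorem ruelle_iterate_const_mul (p : Measure E) (f φ : (ℕ → E) → ℝ) (c : ℝ) (n : ℕ) :
    (ruelle p f)^[n] (fun y => c * φ y) = fun x => c * (ruelle p f)^[n] φ x := by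
  induction n with
  | zero => rfl
  | succ n ih => simp only [Function.iterate_succ_apply', ih, ruelle_const_mul]

theorem ruelle_iterate_of_eigen {h : (ℕ → E) → ℝ} {lam : ℝ}
    (heig : ∀ x, ruelle p f h x = lam * h x) (n : ℕ) :
    (ruelle p f)^[n] h = fun x => lam ^ n * h x := by
  induction n with
  | zero => simp
  | succ n ih =>
    rw [Function.iterate_succ_apply', ih, ruelle_const_mul]
    ext x
    rw [heig, pow_succ, mul_assoc]

theorem ruelle_iterate_nonneg {φ : (ℕ → E) → ℝ} (hφ : ∀ x, 0 ≤ φ x) (n : ℕ) (x : ℕ → E) :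
    0 ≤ (ruelle p f)^[n] φ x := by
  induction n generalizing x with
  | zero => exact hφ x
  | succ n ih =>
    rw [Function.iterate_succ_apply']
    exact integral_nonneg fun a => mul_nonneg (Real.exp_nonneg _) (ih _)

end RuelleAlgebra

section Ruelle

variable [MetricSpace E] [MeasurableSpace E] [BorelSpace E] {p : Measure E}
  {f g φ ψ : (ℕ → E) → ℝ}

theorem integrable_ruelle_integrand [IsFiniteMeasure p] (hf : MemCb f) (hφ : MemCb φ)
    (x : ℕ → E) : Integrable (fun a => Real.exp (f (cons a x)) * φ (cons a x)) p :=
  (hf.exp.mul hφ).integrable_comp_cons p x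

theorem memCb_ruelle [IsFiniteMeasure p] (hf : MemCb f) (hφ : MemCb φ) :
    MemCb (ruelle p f φ) := by
  obtain ⟨hc, M, hM⟩ := hf.exp.mul hφ
  refine ⟨continuous_of_dominated (bound := fun _ => M)
    (fun x => (hc.comp (continuous_cons_left x)).aestronglyMeasurable)
    (fun x => ae_of_all _ fun a => (Real.norm_eq_abs _).trans_le (hM (cons a x)))
    (integrable_const M)
    (ae_of_all _ fun a => hc.comp (continuous_cons_right a)),
    M * p.real Set.univ, fun x => ?_⟩
  simpa [ruelle, Real.norm_eq_abs] using
    norm_integral_le_of_norm_le_const (μ := p)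
      (ae_of_all _ fun a => (Real.norm_eq_abs _).trans_le (hM (cons a x)))

theorem ruelle_mono [IsFiniteMeasure p] (hf : MemCb f) (hφ : MemCb φ) (hψ : MemCb ψ)
    (hle : ∀ y, φ y ≤ ψ y) (x : ℕ → E) : ruelle p f φ x ≤ ruelle p f ψ x :=
  integral_mono (integrable_ruelle_integrand hf hφ x) (integrable_ruelle_integrand hf hψ x)
    fun _ => mul_le_mul_of_nonneg_left (hle _) (Real.exp_nonneg _)

theorem memCb_ruelle_iterate [IsFiniteMeasure p] (hf : MemCb f) (hφ : MemCb φ) (n : ℕ) :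
    MemCb ((ruelle p f)^[n] φ) := by
  induction n with
  | zero => exact hφ
  | succ n ih => rw [Function.iterate_succ_apply']; exact memCb_ruelle hf ih

theorem ruelle_iterate_mono [IsFiniteMeasure p] (hf : MemCb f) (hφ : MemCb φ) (hψ : MemCb ψ)
    (hle : ∀ y, φ y ≤ ψ y) (n : ℕ) (x : ℕ → E) :
    (ruelle p f)^[n] φ x ≤ (ruelle p f)^[n] ψ x := by
  induction n generalizing x with
  | zero => exact hle x
  | succ n ih =>
    simp only [Function.iterate_succ_apply']
    exact ruelle_mono hf (memCb_ruelle_iterate hf hφ n) (memCb_ruelle_iterate hf hψ n) ih x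

theorem mul_ruelle_iterate_one_le [IsFiniteMeasure p] (hf : MemCb f) (hφ : MemCb φ) {c : ℝ}
    (hc : ∀ x, c ≤ φ x) (n : ℕ) (x : ℕ → E) :
    c * (ruelle p f)^[n] (fun _ => 1) x ≤ (ruelle p f)^[n] φ x := by
  have := ruelle_iterate_mono (p := p) hf ((memCb_const (E := E) 1).const_mul c) hφ
    (by simpa using hc) n x
  rwa [ruelle_iterate_const_mul] at this

theorem ruelle_iterate_le_mul_one [IsFiniteMeasure p] (hf : MemCb f) (hφ : MemCb φ) {C : ℝ}
    (hC : ∀ x, φ x ≤ C) (n : ℕ) (x : ℕ → E) :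
    (ruelle p f)^[n] φ x ≤ C * (ruelle p f)^[n] (fun _ => 1) x := by
  have := ruelle_iterate_mono (p := p) hf hφ ((memCb_const (E := E) 1).const_mul C)
    (by simpa using hC) n x
  rwa [ruelle_iterate_const_mul] at this

theorem exp_neg_pow_le_ruelle_iterate_one [IsProbabilityMeasure p] (hg : MemCb g) {M : ℝ}
    (hM : ∀ x, |g x| ≤ M) (n : ℕ) (x : ℕ → E) :
    Real.exp (-M) ^ n ≤ (ruelle p g)^[n] (fun _ => 1) x := by
  induction n generalizing x with
  | zero => simp
  | succ n ih =>
    rw [Function.iterate_succ_apply']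
    calc Real.exp (-M) ^ (n + 1) = ∫ _ : E, Real.exp (-M) * Real.exp (-M) ^ n ∂p := by
          simp [pow_succ, mul_comm]
      _ ≤ _ := integral_mono (integrable_const _)
          (integrable_ruelle_integrand hg (memCb_ruelle_iterate hg (memCb_const 1) n) x) fun _ =>
          mul_le_mul (Real.exp_le_exp.2 (neg_le_of_abs_le (hM _))) (ih _) (by positivity)
            (Real.exp_nonneg _)

theorem ruelle_iterate_one_pos [IsProbabilityMeasure p] (hg : MemCb g) (n : ℕ) (x : ℕ → E) :
    0 < (ruelle p g)^[n] (fun _ => 1) x :=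
  (pow_pos (Real.exp_pos _) n).trans_le
    (exp_neg_pow_le_ruelle_iterate_one hg hg.2.choose_spec n x)

end Ruelle

theorem exists_tendsto_inv_mul_log_of_le_mul {u : ℕ → ℝ} {K c : ℝ} (hK : 0 < K) (hc : 0 < c)
    (hlow : ∀ n, c ^ n ≤ u n) (hsub : ∀ m n, u (m + n) ≤ K * u m * u n) :
    ∃ ℓ, Tendsto (fun n : ℕ => 1 / (n : ℝ) * Real.log (u n)) atTop (𝓝 ℓ) := by
  have hpos : ∀ n, 0 < u n := fun n => (pow_pos hc n).trans_le (hlow n)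
  have hadd : Subadditive fun n => Real.log (u n) + Real.log K := fun m n => by
    have := Real.log_le_log (hpos _) (hsub m n)
    rw [Real.log_mul (mul_pos hK (hpos m)).ne' (hpos n).ne', Real.log_mul hK.ne' (hpos m).ne']
      at this
    linarith
  have hbdd : BddBelow (Set.range fun n : ℕ => (Real.log (u n) + Real.log K) / n) := by
    refine ⟨min 0 (Real.log c - |Real.log K|), ?_⟩
    rintro _ ⟨n, rfl⟩
    rcases n.eq_zero_or_pos with rfl | hn
    · simp
    have hn' : (1 : ℝ) ≤ n := by exact_mod_cast hn
    have hlog : n * Real.log c ≤ Real.log (u n) := by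
      simpa [Real.log_pow] using Real.log_le_log (pow_pos hc n) (hlow n)
    rw [le_div_iff₀ (by linarith)]
    calc min 0 (Real.log c - |Real.log K|) * n ≤ (Real.log c - |Real.log K|) * n :=
          mul_le_mul_of_nonneg_right (min_le_right _ _) (by positivity)
      _ ≤ Real.log (u n) + Real.log K := by
          nlinarith [abs_nonneg (Real.log K), neg_abs_le (Real.log K)]
  have := (hadd.tendsto_lim hbdd).sub (tendsto_const_div_atTop_nhds_zero_nat (Real.log K))
  rw [sub_zero] at this
  exact ⟨_, this.congr fun n => by ring⟩

theorem tendsto_inv_mul_log_of_le_of_le {u : ℕ → ℝ} {a b r : ℝ} (ha : 0 < a) (hr : 0 < r)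
    (hlo : ∀ n, a * r ^ n ≤ u n) (hhi : ∀ n, u n ≤ b * r ^ n) :
    Tendsto (fun n : ℕ => 1 / (n : ℝ) * Real.log (u n)) atTop (𝓝 (Real.log r)) := by
  have hb : 0 < b := by simpa using ha.trans_le (by simpa using (hlo 0).trans (hhi 0))
  have hlim : ∀ t : ℝ, Tendsto (fun n : ℕ => Real.log r + Real.log t / n) atTop
      (𝓝 (Real.log r)) := fun t => by
    simpa using (tendsto_const_div_atTop_nhds_zero_nat (Real.log t)).const_add (Real.log r)
  have hrewrite : ∀ t : ℝ, ∀ n : ℕ, 0 < n →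
      Real.log r + Real.log t / n = 1 / (n : ℝ) * (Real.log t + n * Real.log r) := by
    intro t n hn
    field_simp
    ring
  refine tendsto_of_tendsto_of_tendsto_of_le_of_le' (hlim a) (hlim b) ?_ ?_ <;>
    filter_upwards [eventually_gt_atTop 0] with n hn <;> rw [hrewrite _ n hn] <;>
    refine mul_le_mul_of_nonneg_left ?_ (by positivity)
  · have := Real.log_le_log (by positivity) (hlo n)
    rwa [Real.log_mul ha.ne' (by positivity), Real.log_pow] at this
  · have := Real.log_le_log ((by positivity : 0 < a * r ^ n).trans_le (hlo n)) (hhi n)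
    rwa [Real.log_mul hb.ne' (by positivity), Real.log_pow] at this

section PressureLimit

variable [MetricSpace E] [MeasurableSpace E] [BorelSpace E] {p : Measure E}
  {f g h : (ℕ → E) → ℝ} {α C : ℝ}

theorem ruelle_iterate_one_le_exp_mul_dX_rpow [IsFiniteMeasure p] (hg : MemCb g)
    (hHol : HolderConst α C g) {D : ℝ} (hD : 0 ≤ D) (hCD : C + D ≤ 2 ^ α * D) (n : ℕ)
    (x y : ℕ → E) :
    (ruelle p g)^[n] (fun _ => 1) x ≤
      Real.exp (D * dX x y ^ α) * (ruelle p g)^[n] (fun _ => 1) y := by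
  induction n generalizing x y with
  | zero => simpa using Real.one_le_exp (mul_nonneg hD (Real.rpow_nonneg (dX_nonneg x y) α))
  | succ n ih =>
    have hexp : (C + D) * (dX x y ^ α / 2 ^ α) ≤ D * dX x y ^ α := by
      rw [mul_div_assoc', div_le_iff₀ (by positivity)]
      nlinarith [Real.rpow_nonneg (dX_nonneg x y) α]
    rw [Function.iterate_succ_apply', ruelle, ruelle, ← integral_const_mul]
    set L := (ruelle p g)^[n] fun _ => 1
    have hL : MemCb L := memCb_ruelle_iterate hg (memCb_const 1) n
    refine integral_mono (integrable_ruelle_integrand hg hL x)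
      ((integrable_ruelle_integrand hg hL y).const_mul _) fun a => ?_
    have hLa := ih (cons a x) (cons a y)
    rw [dX_cons_rpow] at hLa
    have hLy : 0 ≤ Real.exp (g (cons a y)) * L (cons a y) :=
      mul_nonneg (Real.exp_nonneg _) (ruelle_iterate_nonneg (fun _ => zero_le_one) n _)
    calc Real.exp (g (cons a x)) * L (cons a x)
        ≤ Real.exp (g (cons a y) + C * (dX x y ^ α / 2 ^ α)) *
            (Real.exp (D * (dX x y ^ α / 2 ^ α)) * L (cons a y)) :=
          mul_le_mul (Real.exp_le_exp.2 (hHol.le_add_of_cons a x y)) hLa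
            (ruelle_iterate_nonneg (fun _ => zero_le_one) n _) (Real.exp_nonneg _)
      _ = Real.exp ((C + D) * (dX x y ^ α / 2 ^ α)) * (Real.exp (g (cons a y)) * L (cons a y)) := by
          rw [add_mul, Real.exp_add, Real.exp_add]
          ring
      _ ≤ Real.exp (D * dX x y ^ α) * (Real.exp (g (cons a y)) * L (cons a y)) :=
          mul_le_mul_of_nonneg_right (Real.exp_le_exp.2 hexp) hLy

theorem ruelle_iterate_one_le_exp_mul [IsFiniteMeasure p] (hα : 0 < α) (hg : MemCb g)
    (hHol : HolderConst α C g) (n : ℕ) (x y : ℕ → E) :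
    (ruelle p g)^[n] (fun _ => 1) x ≤
      Real.exp (max C 0 / (2 ^ α - 1)) * (ruelle p g)^[n] (fun _ => 1) y := by
  -- `max C 0 / (2 ^ α - 1)` is the fixed point of `D ↦ (max C 0 + D) / 2 ^ α`
  have h2 : 0 < (2 : ℝ) ^ α - 1 := sub_pos.2 (Real.one_lt_rpow one_lt_two hα)
  have hD : 0 ≤ max C 0 / (2 ^ α - 1) := div_nonneg (le_max_right _ _) h2.le
  have hCD : C + max C 0 / (2 ^ α - 1) ≤ 2 ^ α * (max C 0 / (2 ^ α - 1)) := by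
    have := mul_div_cancel₀ (max C 0) h2.ne'
    nlinarith [le_max_left C 0]
  refine (ruelle_iterate_one_le_exp_mul_dX_rpow hg hHol hD hCD n x y).trans
    (mul_le_mul_of_nonneg_right (Real.exp_le_exp.2 (mul_le_of_le_one_right hD ?_))
      (ruelle_iterate_nonneg (fun _ => zero_le_one) n y))
  exact Real.rpow_le_one (dX_nonneg x y) (dX_le_one x y) hα.le

theorem exists_tendsto_log_ruelle_iterate_one [IsProbabilityMeasure p] (hα : 0 < α)
    (hg : MemCb g) (hHol : HolderConst α C g) (x₀ : ℕ → E) :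
    ∃ ℓ, Tendsto (fun n : ℕ => 1 / (n : ℝ) * Real.log ((ruelle p g)^[n] (fun _ => 1) x₀))
      atTop (𝓝 ℓ) := by
  refine exists_tendsto_inv_mul_log_of_le_mul (Real.exp_pos (max C 0 / (2 ^ α - 1)))
    (Real.exp_pos (-hg.2.choose))
    (fun n => exp_neg_pow_le_ruelle_iterate_one (p := p) hg hg.2.choose_spec n x₀)
    fun m n => ?_
  rw [Function.iterate_add_apply]
  refine (ruelle_iterate_le_mul_one hg (memCb_ruelle_iterate hg (memCb_const 1) n)
    (fun y => ruelle_iterate_one_le_exp_mul hα hg hHol n y x₀) m x₀).trans_eq ?_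
  ring

theorem tendsto_logLambda [Nonempty E] [IsProbabilityMeasure p] (hα : 0 < α) (hg : MemCb g)
    (hHol : HolderConst α C g) :
    Tendsto (fun n : ℕ => 1 / (n : ℝ) *
      Real.log ((ruelle p g)^[n] (fun _ => 1) (Classical.arbitrary (ℕ → E))))
      atTop (𝓝 (logLambda p g)) := by
  obtain ⟨ℓ, hℓ⟩ :=
    exists_tendsto_log_ruelle_iterate_one (p := p) hα hg hHol (Classical.arbitrary _)
  rwa [logLambda, hℓ.limUnder_eq]

theorem logLambda_eq_log_of_eigen [Nonempty E] [IsFiniteMeasure p] (hf : MemCb f)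
    (hh : MemCb h) {lam c C : ℝ} (hlam : 0 < lam) (hc : 0 < c) (hhc : ∀ x, c ≤ h x)
    (hhC : ∀ x, h x ≤ C) (heig : ∀ x, ruelle p f h x = lam * h x) :
    logLambda p f = Real.log lam := by
  set x₀ := Classical.arbitrary (ℕ → E)
  have hC : 0 < C := hc.trans_le ((hhc x₀).trans (hhC x₀))
  refine (tendsto_inv_mul_log_of_le_of_le (a := c / C) (b := C / c) (by positivity) hlam
    (fun n => ?_) (fun n => ?_)).limUnder_eq
  · have := ruelle_iterate_le_mul_one (p := p) hf hh hhC n x₀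
    rw [ruelle_iterate_of_eigen heig] at this
    rw [div_mul_eq_mul_div, div_le_iff₀ hC]
    nlinarith [hhc x₀, pow_pos hlam n]
  · have := mul_ruelle_iterate_one_le (p := p) hf hh hhc n x₀
    rw [ruelle_iterate_of_eigen heig] at this
    rw [div_mul_eq_mul_div, le_div_iff₀ hc]
    nlinarith [hhC x₀, pow_pos hlam n]

end PressureLimit

theorem mul_exp_integral_div_le_integral_mul_exp {Ω : Type*} [MeasurableSpace Ω]
    {μ : Measure Ω} {w v : Ω → ℝ} (hw : Integrable w μ) (hw0 : ∀ a, 0 ≤ w a)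
    (hwv : Integrable (fun a => w a * v a) μ) (hwe : Integrable (fun a => w a * Real.exp (v a)) μ)
    (hW : 0 < ∫ a, w a ∂μ) :
    (∫ a, w a ∂μ) * Real.exp ((∫ a, w a * v a ∂μ) / ∫ a, w a ∂μ) ≤
      ∫ a, w a * Real.exp (v a) ∂μ := by
  set s := (∫ a, w a * v a ∂μ) / ∫ a, w a ∂μ
  have htangent : ∀ a, Real.exp s * (w a * v a - s * w a + w a) ≤ w a * Real.exp (v a) := by
    intro a
    calc Real.exp s * (w a * v a - s * w a + w a) = Real.exp s * w a * (v a - s + 1) := by ring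
      _ ≤ Real.exp s * w a * Real.exp (v a - s) :=
          mul_le_mul_of_nonneg_left (Real.add_one_le_exp _) (mul_nonneg (by positivity) (hw0 a))
      _ = w a * Real.exp (v a) := by rw [Real.exp_sub]; field_simp
  have hint : ∫ a, Real.exp s * (w a * v a - s * w a + w a) ∂μ =
      (∫ a, w a ∂μ) * Real.exp s := by
    have hsub : Integrable (fun a => w a * v a - s * w a) μ := hwv.sub (hw.const_mul s)
    have hs : s * ∫ a, w a ∂μ = ∫ a, w a * v a ∂μ := div_mul_cancel₀ _ hW.ne'
    rw [integral_const_mul, integral_add hsub hw, integral_sub hwv (hw.const_mul s),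
      integral_const_mul, hs, sub_self, zero_add, mul_comm]
  exact hint.symm.trans_le
    (integral_mono (((hwv.sub (hw.const_mul s)).add hw).const_mul _) hwe htangent)

section NormalizedRuelle

variable [MeasurableSpace E] {p : Measure E} {f g h : (ℕ → E) → ℝ} {lam : ℝ}

def normalizedRuelle (p : Measure E) (f h : (ℕ → E) → ℝ) (lam : ℝ) (φ : (ℕ → E) → ℝ) :
    (ℕ → E) → ℝ :=
  fun x => ruelle p f (fun y => h y * φ y) x / (lam * h x)

theorem normalizedRuelle_comp_shift (hlam : lam ≠ 0) (hh0 : ∀ x, h x ≠ 0)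
    (heig : ∀ x, ruelle p f h x = lam * h x) (φ : (ℕ → E) → ℝ) (x : ℕ → E) :
    normalizedRuelle p f h lam (fun y => φ (shift y)) x = φ x := by
  have : ruelle p f (fun y => h y * φ (shift y)) x = ruelle p f h x * φ x := by
    rw [ruelle, ruelle, ← integral_mul_const]
    refine integral_congr_ae (ae_of_all _ fun a => ?_)
    simp only [show shift (cons a x) = x from rfl]
    ring
  rw [normalizedRuelle, this, heig]
  field_simp [hh0 x]

theorem normalizedRuelle_exp_eq (hlam : 0 < lam) (hhpos : ∀ x, 0 < h x) {n : ℕ}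
    (hL : ∀ x, 0 < (ruelle p g)^[n] h x) (x : ℕ → E) :
    normalizedRuelle p f h lam (fun y => Real.exp (g y - f y +
        (Real.log ((ruelle p g)^[n] h y) - Real.log (lam ^ n * h y)))) x =
      (ruelle p g)^[n + 1] h x / (lam ^ (n + 1) * h x) := by
  have hpt : ∀ a, Real.exp (f (cons a x)) * (h (cons a x) * Real.exp (g (cons a x) -
      f (cons a x) + (Real.log ((ruelle p g)^[n] h (cons a x)) -
        Real.log (lam ^ n * h (cons a x))))) =
      Real.exp (g (cons a x)) * (ruelle p g)^[n] h (cons a x) / lam ^ n := by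
    intro a
    have := hhpos (cons a x)
    rw [Real.exp_add, Real.exp_sub, Real.exp_sub, Real.exp_log (hL _),
      Real.exp_log (by positivity)]
    field_simp
  rw [normalizedRuelle, ruelle, integral_congr_ae (ae_of_all _ hpt), integral_div,
    Function.iterate_succ_apply', ruelle]
  have := hhpos x
  field_simp
  ring

section Analytic

variable [MetricSpace E]

theorem integral_normalizedRuelle_mul (ν : Measure (ℕ → E)) (hh : MemCb h) (hlam : lam ≠ 0)
    (hh0 : ∀ x, h x ≠ 0)
    (hconf : ∀ φ : (ℕ → E) → ℝ, MemCb φ → ∫ x, ruelle p f φ x ∂ν = lam * ∫ x, φ x ∂ν)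
    {φ : (ℕ → E) → ℝ} (hφ : MemCb φ) :
    ∫ x, normalizedRuelle p f h lam φ x * h x ∂ν = ∫ x, φ x * h x ∂ν := by
  have hpt : ∀ x, normalizedRuelle p f h lam φ x * h x =
      ruelle p f (fun y => h y * φ y) x / lam := fun x => by
    rw [normalizedRuelle]
    field_simp [hh0 x]
  rw [integral_congr_ae (ae_of_all _ hpt), integral_div, hconf _ (hh.mul hφ)]
  field_simp
  exact integral_congr_ae (ae_of_all _ fun x => mul_comm _ _)

variable [BorelSpace E] [IsFiniteMeasure p] {c : ℝ}

theorem memCb_normalizedRuelle (hf : MemCb f) (hh : MemCb h) (hlam : 0 < lam) (hc : 0 < c)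
    (hhc : ∀ x, c ≤ h x) {φ : (ℕ → E) → ℝ} (hφ : MemCb φ) :
    MemCb (normalizedRuelle p f h lam φ) := by
  obtain ⟨hLc, M, hM⟩ := memCb_ruelle (p := p) hf (hh.mul hφ)
  have hden : ∀ x, lam * c ≤ lam * h x := fun x => mul_le_mul_of_nonneg_left (hhc x) hlam.le
  refine ⟨hLc.div (continuous_const.mul hh.1) fun x => ((by positivity : 0 < lam * c).trans_le
    (hden x)).ne', M / (lam * c), fun x => ?_⟩
  rw [normalizedRuelle, abs_div, abs_of_pos ((by positivity : 0 < lam * c).trans_le (hden x))]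
  exact div_le_div₀ ((abs_nonneg _).trans (hM x)) (hM x) (by positivity) (hden x)

theorem exp_normalizedRuelle_le (hf : MemCb f) (hh : MemCb h) (hlam : 0 < lam)
    (hhpos : ∀ x, 0 < h x) (heig : ∀ x, ruelle p f h x = lam * h x) {φ : (ℕ → E) → ℝ}
    (hφ : MemCb φ) (x : ℕ → E) :
    Real.exp (normalizedRuelle p f h lam φ x) ≤
      normalizedRuelle p f h lam (fun y => Real.exp (φ y)) x := by
  have hW : ∫ a, Real.exp (f (cons a x)) * h (cons a x) ∂p = lam * h x := heig x
  have hjensen := mul_exp_integral_div_le_integral_mul_exp (μ := p)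
    (w := fun a => Real.exp (f (cons a x)) * h (cons a x)) (v := fun a => φ (cons a x))
    (integrable_ruelle_integrand hf hh x)
    (fun a => mul_nonneg (Real.exp_nonneg _) (hhpos _).le)
    ((hf.exp.mul hh).mul hφ |>.integrable_comp_cons p x)
    ((hf.exp.mul hh).mul hφ.exp |>.integrable_comp_cons p x)
    (hW ▸ mul_pos hlam (hhpos x))
  rw [hW] at hjensen
  rw [normalizedRuelle, normalizedRuelle, le_div_iff₀ (mul_pos hlam (hhpos x)), mul_comm]
  simpa only [ruelle, ← mul_assoc] using hjensen

end Analytic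

end NormalizedRuelle

section Gibbs

variable [MetricSpace E] [MeasurableSpace E] [BorelSpace E] {p : Measure E}
  [IsProbabilityMeasure p] {f g h : (ℕ → E) → ℝ} {lam c : ℝ}

theorem ruelle_iterate_pos (hg : MemCb g) (hh : MemCb h) (hc : 0 < c) (hhc : ∀ x, c ≤ h x)
    (n : ℕ) (x : ℕ → E) : 0 < (ruelle p g)^[n] h x :=
  (mul_pos hc (ruelle_iterate_one_pos hg n x)).trans_le (mul_ruelle_iterate_one_le hg hh hhc n x)

theorem memCb_log_ruelle_iterate_sub (hg : MemCb g) (hh : MemCb h) (hlam : 0 < lam)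
    (hc : 0 < c) (hhc : ∀ x, c ≤ h x) (n : ℕ) :
    MemCb fun x => Real.log ((ruelle p g)^[n] h x) - Real.log (lam ^ n * h x) := by
  refine ((memCb_ruelle_iterate hg hh n).log (c := c * Real.exp (-hg.2.choose) ^ n)
    (by positivity) fun x => ?_).sub
    ((hh.const_mul _).log (c := lam ^ n * c) (by positivity) fun x => ?_)
  · exact (mul_le_mul_of_nonneg_left
      (exp_neg_pow_le_ruelle_iterate_one hg hg.2.choose_spec n x) hc.le).trans
      (mul_ruelle_iterate_one_le hg hh hhc n x)
  · exact mul_le_mul_of_nonneg_left (hhc x) (by positivity)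

variable [OpensMeasurableSpace (ℕ → E)] {ν : Measure (ℕ → E)} [IsFiniteMeasure ν]

theorem nat_mul_integral_le_integral_log_ruelle_iterate_sub (hf : MemCb f) (hg : MemCb g)
    (hh : MemCb h) (hlam : 0 < lam) (hc : 0 < c) (hhc : ∀ x, c ≤ h x)
    (heig : ∀ x, ruelle p f h x = lam * h x)
    (hconf : ∀ φ : (ℕ → E) → ℝ, MemCb φ → ∫ x, ruelle p f φ x ∂ν = lam * ∫ x, φ x ∂ν)
    (n : ℕ) :
    n * ∫ x, (g x - f x) * h x ∂ν ≤
      ∫ x, (Real.log ((ruelle p g)^[n] h x) - Real.log (lam ^ n * h x)) * h x ∂ν := by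
  have hpos : ∀ x, 0 < h x := fun x => hc.trans_le (hhc x)
  induction n with
  | zero => simp
  | succ n ih =>
    have hΦ := memCb_log_ruelle_iterate_sub (p := p) hg hh hlam hc hhc n
    have hu := (hg.sub hf).add hΦ
    have hstep : ∀ x, normalizedRuelle p f h lam (fun y => g y - f y +
        (Real.log ((ruelle p g)^[n] h y) - Real.log (lam ^ n * h y))) x ≤
        Real.log ((ruelle p g)^[n + 1] h x) - Real.log (lam ^ (n + 1) * h x) := fun x => by
      have hL := ruelle_iterate_pos (p := p) hg hh hc hhc
      rw [← Real.log_div (hL _ x).ne' (by have := hpos x; positivity),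
        ← normalizedRuelle_exp_eq hlam hpos (hL n) x,
        Real.le_log_iff_exp_le (normalizedRuelle_exp_eq hlam hpos (hL n) x ▸
          div_pos (hL _ x) (by have := hpos x; positivity))]
      exact exp_normalizedRuelle_le hf hh hlam hpos heig hu x
    calc ((n + 1 : ℕ) : ℝ) * ∫ x, (g x - f x) * h x ∂ν
        = ∫ x, (g x - f x) * h x ∂ν + n * ∫ x, (g x - f x) * h x ∂ν := by push_cast; ring
      _ ≤ ∫ x, (g x - f x) * h x ∂ν +
          ∫ x, (Real.log ((ruelle p g)^[n] h x) - Real.log (lam ^ n * h x)) * h x ∂ν :=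
          add_le_add_right ih _
      _ = ∫ x, (g x - f x + (Real.log ((ruelle p g)^[n] h x) -
          Real.log (lam ^ n * h x))) * h x ∂ν := by
          rw [← integral_add (((hg.sub hf).mul hh).integrable ν) ((hΦ.mul hh).integrable ν)]
          simp only [add_mul]
      _ = ∫ x, normalizedRuelle p f h lam (fun y => g y - f y +
          (Real.log ((ruelle p g)^[n] h y) - Real.log (lam ^ n * h y))) x * h x ∂ν :=
          (integral_normalizedRuelle_mul ν hh hlam.ne' (fun x => (hpos x).ne') hconf hu).symm
      _ ≤ _ := integral_mono (((memCb_normalizedRuelle hf hh hlam hc hhc hu).mul hh).integrable ν)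
          (((memCb_log_ruelle_iterate_sub hg hh hlam hc hhc (n + 1)).mul hh).integrable ν)
          fun x => mul_le_mul_of_nonneg_right (hstep x) (hpos x).le

theorem log_add_integral_le_logLambda [Nonempty E] {α C Ch : ℝ} (hα : 0 < α) (hf : MemCb f)
    (hg : MemCb g) (hHol : HolderConst α C g) (hh : MemCb h) (hlam : 0 < lam) (hc : 0 < c)
    (hhc : ∀ x, c ≤ h x) (hhC : ∀ x, h x ≤ Ch) (heig : ∀ x, ruelle p f h x = lam * h x)
    (hconf : ∀ φ : (ℕ → E) → ℝ, MemCb φ → ∫ x, ruelle p f φ x ∂ν = lam * ∫ x, φ x ∂ν)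
    (hnorm : ∫ x, h x ∂ν = 1) :
    Real.log lam + ∫ x, (g x - f x) * h x ∂ν ≤ logLambda p g := by
  set x₀ := Classical.arbitrary (ℕ → E)
  set J := ∫ x, (g x - f x) * h x ∂ν
  set K := max C 0 / (2 ^ α - 1)
  set B := Real.log Ch + K - Real.log c
  have hCh : 0 < Ch := hc.trans_le ((hhc x₀).trans (hhC x₀))
  have hΦle : ∀ n x, Real.log ((ruelle p g)^[n] h x) - Real.log (lam ^ n * h x) ≤
      B + Real.log ((ruelle p g)^[n] (fun _ => 1) x₀) - n * Real.log lam := fun n x => by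
    have hup := Real.log_le_log (ruelle_iterate_pos (p := p) hg hh hc hhc n x)
      ((ruelle_iterate_le_mul_one hg hh hhC n x).trans
        (mul_le_mul_of_nonneg_left (ruelle_iterate_one_le_exp_mul hα hg hHol n x x₀) hCh.le))
    have hlow := Real.log_le_log (by positivity)
      (mul_le_mul_of_nonneg_left (hhc x) (pow_pos hlam n).le)
    have hL₀ := ruelle_iterate_one_pos (p := p) hg n x₀
    rw [Real.log_mul hCh.ne' (by positivity), Real.log_mul (Real.exp_pos _).ne' hL₀.ne',
      Real.log_exp] at hup
    rw [Real.log_mul (pow_pos hlam n).ne' hc.ne', Real.log_pow] at hlow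
    linarith
  have hbound : ∀ n : ℕ, n * J ≤ B + Real.log ((ruelle p g)^[n] (fun _ => 1) x₀) -
      n * Real.log lam := fun n => by
    refine (nat_mul_integral_le_integral_log_ruelle_iterate_sub hf hg hh hlam hc hhc heig
      hconf n).trans ?_
    refine (integral_mono (((memCb_log_ruelle_iterate_sub hg hh hlam hc hhc n).mul hh).integrable ν)
      ((hh.const_mul _).integrable ν)
      fun x => mul_le_mul_of_nonneg_right (hΦle n x) (hc.trans_le (hhc x)).le).trans_eq ?_
    rw [integral_const_mul, hnorm, mul_one]
  have hlim : Tendsto (fun n : ℕ => Real.log lam + J - B / n) atTop (𝓝 (Real.log lam + J)) := by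
    simpa using (tendsto_const_div_atTop_nhds_zero_nat B).const_sub (Real.log lam + J)
  refine le_of_tendsto_of_tendsto hlim (tendsto_logLambda hα hg hHol) ?_
  filter_upwards [eventually_gt_atTop 0] with n hn
  have hn' : (0 : ℝ) < n := by exact_mod_cast hn
  calc Real.log lam + J - B / n = 1 / n * (n * J - B + n * Real.log lam) := by field_simp; ring
    _ ≤ _ := mul_le_mul_of_nonneg_left (by linarith [hbound n]) (by positivity)

end Gibbs

section Functional

variable {X : Type*} [TopologicalSpace X] [MeasurableSpace X] [BorelSpace X]

def weightedIntegralCLM (μ : Measure X) [IsFiniteMeasure μ] (k : X →ᵇ ℝ) :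
    (X →ᵇ ℝ) →L[ℝ] ℝ :=
  (L1.integralCLM.comp (toLp 1 μ ℝ)).comp ((ContinuousLinearMap.mul ℝ (X →ᵇ ℝ)).flip k)

theorem weightedIntegralCLM_apply (μ : Measure X) [IsFiniteMeasure μ] (k g : X →ᵇ ℝ) :
    weightedIntegralCLM μ k g = ∫ x, g x * k x ∂μ := by
  rw [weightedIntegralCLM, ContinuousLinearMap.comp_apply, ContinuousLinearMap.comp_apply,
    ← L1.integral_def, L1.integral_eq_integral]
  exact integral_congr_ae (coeFn_toLp 1 μ ℝ _)

end Functional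

section VariationalEntropy

variable [MetricSpace E]

theorem mem_Maσ_of_integral_mul [MeasurableSpace E] [OpensMeasurableSpace (ℕ → E)]
    {ν : Measure (ℕ → E)} {k : (ℕ → E) → ℝ} {μ : WeakDual ℝ ((ℕ → E) →ᵇ ℝ)}
    (hμ : ∀ g : (ℕ → E) →ᵇ ℝ, μ g = ∫ x, g x * k x ∂ν) (hk : ∀ x, 0 ≤ k x)
    (hk1 : ∫ x, k x ∂ν = 1)
    (hinv : ∀ g : (ℕ → E) →ᵇ ℝ, ∫ x, g (shift x) * k x ∂ν = ∫ x, g x * k x ∂ν) :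
    μ ∈ Maσ E := by
  refine ⟨⟨?_, fun g hg => ?_⟩, fun g => ?_⟩ <;> rw [hμ]
  · simpa using hk1
  · exact integral_nonneg fun x => mul_nonneg (hg x) (hk x)
  · rw [hμ]
    exact hinv g

variable [MeasurableSpace E] [Nonempty E] {p : Measure E} {α : ℝ}
  (μ : WeakDual ℝ ((ℕ → E) →ᵇ ℝ))

theorem entropyV_add_le {g : (ℕ → E) →ᵇ ℝ} (hg : ∃ C, HolderConst α C ⇑g) :
    entropyV p α μ + (μ g : EReal) ≤ (logLambda p g : EReal) := by
  have : entropyV p α μ ≤ ((-(μ g) + logLambda p g : ℝ) : EReal) := sInf_le ⟨g, hg, rfl⟩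
  calc entropyV p α μ + (μ g : EReal) ≤ ((-(μ g) + logLambda p g : ℝ) : EReal) + μ g :=
        add_le_add_left this _
    _ = logLambda p g := by rw [← EReal.coe_add]; ring_nf

theorem le_entropyV_add {r : ℝ} (g₀ : (ℕ → E) →ᵇ ℝ)
    (hr : ∀ g : (ℕ → E) →ᵇ ℝ, (∃ C, HolderConst α C ⇑g) → r ≤ μ g₀ - μ g + logLambda p g) :
    (r : EReal) ≤ entropyV p α μ + μ g₀ := by
  have : ((r - μ g₀ : ℝ) : EReal) ≤ entropyV p α μ := by
    refine le_sInf ?_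
    rintro _ ⟨g, hg, rfl⟩
    exact EReal.coe_le_coe_iff.2 (by linarith [hr g hg])
  calc (r : EReal) = ((r - μ g₀ : ℝ) : EReal) + μ g₀ := by rw [← EReal.coe_add]; ring_nf
    _ ≤ entropyV p α μ + μ g₀ := add_le_add_left this _

end VariationalEntropy

theorem statement16_general {E : Type*} [MetricSpace E]
    [TopologicalSpace.SeparableSpace E] [MeasurableSpace E] [BorelSpace E] [Nonempty E]
    (p : Measure E) [IsProbabilityMeasure p]
    (α : ℝ) (hα0 : 0 < α)
    (f : (ℕ → E) →ᵇ ℝ) (hf : ∃ C : ℝ, HolderConst α C ⇑f)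
    (ν : Measure (ℕ → E)) (hν : IsProbabilityMeasure ν) (lam : ℝ) (hlam : 0 < lam)
    (hconf : ∀ φ : (ℕ → E) → ℝ, MemCb φ →
      (∫ x, ruelle p (⇑f) φ x ∂ν) = lam * ∫ x, φ x ∂ν)
    (h : (ℕ → E) → ℝ) (hh : MemHol α h)
    (hbd : ∃ c C : ℝ, 0 < c ∧ (∀ x, c ≤ h x) ∧ ∀ x, h x ≤ C)
    (heig : ∀ x, ruelle p (⇑f) h x = lam * h x)
    (hnorm : (∫ x, h x ∂ν) = 1) :
    (⨆ μ ∈ Maσ E, entropyV p α μ + ((μ f : ℝ) : EReal)) = ((Real.log lam : ℝ) : EReal) ∧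
    ∃ μf : WeakDual ℝ ((ℕ → E) →ᵇ ℝ),
      (∀ g : (ℕ → E) →ᵇ ℝ, μf g = ∫ x, g x * h x ∂ν) ∧
      μf ∈ Maσ E ∧
      entropyV p α μf + ((μf f : ℝ) : EReal) = ((Real.log lam : ℝ) : EReal) := by
  obtain ⟨c, Ch, hc, hhc, hhC⟩ := hbd
  have : SecondCountableTopology E := UniformSpace.secondCountable_of_separable E
  have hhb : MemCb h := ⟨hh.1, hh.2.1⟩
  have hpos : ∀ x, 0 < h x := fun x => hc.trans_le (hhc x)
  set μf : WeakDual ℝ ((ℕ → E) →ᵇ ℝ) := weightedIntegralCLM ν hhb.toBCF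
  have hμf : ∀ g : (ℕ → E) →ᵇ ℝ, μf g = ∫ x, g x * h x ∂ν := weightedIntegralCLM_apply ν _
  have hmem : μf ∈ Maσ E := mem_Maσ_of_integral_mul hμf (fun x => (hpos x).le) hnorm fun g => by
    simpa [normalizedRuelle_comp_shift hlam.ne' (fun x => (hpos x).ne') heig] using
      (integral_normalizedRuelle_mul ν hhb hlam.ne' (fun x => (hpos x).ne') hconf
        g.memCb.comp_shift).symm
  have hlogf : logLambda p f = Real.log lam :=
    logLambda_eq_log_of_eigen f.memCb hhb hlam hc hhc hhC heig
  have hattain : entropyV p α μf + (μf f : EReal) = Real.log lam := by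
    refine le_antisymm (hlogf ▸ entropyV_add_le μf hf) (le_entropyV_add μf f fun g ⟨C, hC⟩ => ?_)
    have hgibbs := log_add_integral_le_logLambda hα0 f.memCb g.memCb hC hhb hlam hc hhc hhC heig
      hconf hnorm
    have hsub : ∫ x, (g x - f x) * h x ∂ν = μf g - μf f := by
      rw [hμf, hμf,
        ← integral_sub ((g.memCb.mul hhb).integrable ν) ((f.memCb.mul hhb).integrable ν)]
      simp only [sub_mul]
    linarith
  exact ⟨le_antisymm (iSup₂_le fun μ _ => hlogf ▸ entropyV_add_le μ hf)
    (le_iSup₂_of_le μf hmem hattain.ge), μf, hμf, hmem, hattain⟩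

/-- For a bounded Hölder potential `f`, the variational supremum
equals `log λ_f` and is attained by the countably additive Borel probability measure
`μ_f = h dν`; in particular `f` admits an equilibrium state whose Yosida–Hewitt
decomposition has no purely finitely additive part. -/
theorem statement16 {E : Type*} [MetricSpace E] [CompleteSpace E]
    [TopologicalSpace.SeparableSpace E] [MeasurableSpace E] [BorelSpace E] [Nonempty E]
    (p : Measure E) [IsProbabilityMeasure p]
    (α : ℝ) (hα0 : 0 < α) (hα1 : α < 1)
    (f : (ℕ → E) →ᵇ ℝ) (hf : ∃ C : ℝ, HolderConst α C ⇑f)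
    (ν : Measure (ℕ → E)) (hν : IsProbabilityMeasure ν) (lam : ℝ) (hlam : 0 < lam)
    (hconf : ∀ φ : (ℕ → E) → ℝ, MemCb φ →
      (∫ x, ruelle p (⇑f) φ x ∂ν) = lam * ∫ x, φ x ∂ν)
    (h : (ℕ → E) → ℝ) (hh : MemHol α h)
    (hbd : ∃ c C : ℝ, 0 < c ∧ (∀ x, c ≤ h x) ∧ ∀ x, h x ≤ C)
    (heig : ∀ x, ruelle p (⇑f) h x = lam * h x)
    (hnorm : (∫ x, h x ∂ν) = 1) :
    (⨆ μ ∈ Maσ E, entropyV p α μ + ((μ f : ℝ) : EReal)) = ((Real.log lam : ℝ) : EReal) ∧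
    ∃ μf : WeakDual ℝ ((ℕ → E) →ᵇ ℝ),
      (∀ g : (ℕ → E) →ᵇ ℝ, μf g = ∫ x, g x * h x ∂ν) ∧
      μf ∈ Maσ E ∧
      entropyV p α μf + ((μf f : ℝ) : EReal) = ((Real.log lam : ℝ) : EReal) :=
  statement16_general p α hα0 f hf ν hν lam hlam hconf h hh hbd heig hnorm

end
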